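/- arXiv:2104.10875 — 3 statements merged into one kernel-verified Lean document; each statement's English description precedes it below -/
import Mathlib

section
/- Solving r_{gNB,s} = r_{w,s}, i.e., τˡ(1−τʷ)^N · T^{s,l} = τʷ(1−τʷ)^{N−1}(1−τˡ) · T^{s,w}, for τˡ yields the unique solution τˡ = τʷ·T^{s,w} / (T^{s,l} − τʷ·T^{s,l} + τʷ·T^{s,w}), which lies in (0,1) whenever τʷ ∈ (0,1) and T^{s,l}, T^{s,w} > 0. -/
/-- Equal per-node successful airtime: the equation
τˡ(1−τʷ)^N·T^{s,l} = τʷ(1−τʷ)^{N−1}(1−τˡ)·T^{s,w}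
has unique solution τˡ = τʷT^{s,w}/(T^{s,l} − τʷT^{s,l} + τʷT^{s,w}) ∈ (0,1). -/
theorem proportional_fairness_solution (τw Tsl Tsw : ℝ) (N : ℕ) (hN : 1 ≤ N)
    (hτw : τw ∈ Set.Ioo (0:ℝ) 1) (hTsl : 0 < Tsl) (hTsw : 0 < Tsw) :
    (τw * Tsw / (Tsl - τw * Tsl + τw * Tsw)) * (1 - τw) ^ N * Tsl
        = τw * (1 - τw) ^ (N - 1) * (1 - τw * Tsw / (Tsl - τw * Tsl + τw * Tsw)) * Tsw ∧
    τw * Tsw / (Tsl - τw * Tsl + τw * Tsw) ∈ Set.Ioo (0:ℝ) 1 ∧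
    ∀ x : ℝ, x * (1 - τw) ^ N * Tsl = τw * (1 - τw) ^ (N - 1) * (1 - x) * Tsw →
      x = τw * Tsw / (Tsl - τw * Tsl + τw * Tsw) := by
  obtain ⟨hτ0, hτ1⟩ := hτw
  have hD : 0 < Tsl - τw * Tsl + τw * Tsw := by nlinarith
  have hDne : Tsl - τw * Tsl + τw * Tsw ≠ 0 := ne_of_gt hD
  have h1τ : 0 < 1 - τw := by linarith
  have hpow : (1 - τw) ^ N = (1 - τw) ^ (N - 1) * (1 - τw) := by
    rw [← pow_succ, Nat.sub_add_cancel hN]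
  have hpne : (1 - τw) ^ (N - 1) ≠ 0 := pow_ne_zero _ (ne_of_gt h1τ)
  refine ⟨?_, ⟨?_, ?_⟩, ?_⟩
  · rw [hpow]; field_simp; ring
  · positivity
  · rw [div_lt_one hD]; nlinarith
  · intro x hx
    rw [hpow] at hx
    have key : x * (Tsl - τw * Tsl + τw * Tsw) = τw * Tsw := by
      have h2 : (1 - τw) ^ (N - 1) * (x * (Tsl - τw * Tsl + τw * Tsw))
          = (1 - τw) ^ (N - 1) * (τw * Tsw) := by nlinarith [hx]
      exact mul_left_cancel₀ hpne h2
    field_simp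
    linarith [key]
end

section
/- Let τ(p) = 2(1−2p)/((1−2p)(W+1) + pW(1−(2p)^m)) for p ∈ (0, 1/2), with W ≥ 1, m ≥ 1. Then τ(p) is continuous and strictly decreasing on (0, 1/2), hence injective. -/
/-!
Cancelling the factor `1 - 2p` and expanding `1 - (2p)^m` as a geometric sum gives
`τ(p) = 2 / (W + 1 + (W/2) ∑_{k=1}^{m} (2p)^k)` for `p ≠ 1/2`. For `p ≥ 0` the denominator is
positive and, since `m ≥ 1` and `W > 0`, strictly increasing in `p`; so `τ` is continuous and
strictly decreasing on `(0, 1/2)`.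
-/

open Finset Set

noncomputable def bianchiReducedDenom (W : ℝ) (m : ℕ) (p : ℝ) : ℝ :=
  W + 1 + W / 2 * ∑ k ∈ range m, (2 * p) ^ (k + 1)

lemma bianchi_denom_eq_mul_reducedDenom (W : ℝ) (m : ℕ) (p : ℝ) :
    (1 - 2 * p) * (W + 1) + p * W * (1 - (2 * p) ^ m)
      = (1 - 2 * p) * bianchiReducedDenom W m p := by
  have hgeom := geom_sum_mul (2 * p) m
  have hshift : ∑ k ∈ range m, (2 * p) ^ (k + 1) = 2 * p * ∑ k ∈ range m, (2 * p) ^ k := by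
    rw [mul_sum]
    exact sum_congr rfl fun k _ => pow_succ' _ _
  rw [bianchiReducedDenom, hshift]
  linear_combination (p * W) * hgeom

lemma bianchi_tau_eq_two_div_reducedDenom (W : ℝ) (m : ℕ) {p : ℝ} (hp : 2 * p ≠ 1) :
    2 * (1 - 2 * p) / ((1 - 2 * p) * (W + 1) + p * W * (1 - (2 * p) ^ m))
      = 2 / bianchiReducedDenom W m p := by
  rw [bianchi_denom_eq_mul_reducedDenom, mul_comm 2, mul_div_mul_left _ _ (sub_ne_zero.mpr hp.symm)]

lemma bianchiReducedDenom_pos {W : ℝ} (hW : 0 ≤ W) (m : ℕ) {p : ℝ} (hp : 0 ≤ p) :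
    0 < bianchiReducedDenom W m p := by
  unfold bianchiReducedDenom
  positivity

lemma bianchiReducedDenom_strictMonoOn {W : ℝ} (hW : 0 < W) {m : ℕ} (hm : m ≠ 0) :
    StrictMonoOn (bianchiReducedDenom W m) (Ici 0) := by
  intro x hx y hy hxy
  have hpow : ∀ k ∈ range m, (2 * x) ^ (k + 1) < (2 * y) ^ (k + 1) := fun k _ =>
    pow_left_strictMonoOn₀ k.succ_ne_zero (by simpa using hx) (by simpa using hy)
      (by linarith)
  have hsum := sum_lt_sum_of_nonempty (nonempty_range_iff.mpr hm) hpow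
  unfold bianchiReducedDenom
  gcongr

lemma continuous_bianchiReducedDenom (W : ℝ) (m : ℕ) : Continuous (bianchiReducedDenom W m) := by
  unfold bianchiReducedDenom
  fun_prop

/-- The Bianchi access probability τ(p) = 2(1−2p)/((1−2p)(W+1) + pW(1−(2p)^m))
is continuous and strictly decreasing on (0, 1/2), hence injective there. -/
theorem bianchi_tau_strictAnti (W : ℝ) (m : ℕ) (hW : 1 ≤ W) (hm : 1 ≤ m) :
    ContinuousOn
      (fun p : ℝ => 2 * (1 - 2 * p) / ((1 - 2 * p) * (W + 1) + p * W * (1 - (2 * p) ^ m)))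
      (Set.Ioo (0:ℝ) (1/2)) ∧
    StrictAntiOn
      (fun p : ℝ => 2 * (1 - 2 * p) / ((1 - 2 * p) * (W + 1) + p * W * (1 - (2 * p) ^ m)))
      (Set.Ioo (0:ℝ) (1/2)) ∧
    Set.InjOn
      (fun p : ℝ => 2 * (1 - 2 * p) / ((1 - 2 * p) * (W + 1) + p * W * (1 - (2 * p) ^ m)))
      (Set.Ioo (0:ℝ) (1/2)) := by
  have hW0 : 0 < W := by linarith
  have hpos : ∀ p ∈ Ioo (0 : ℝ) (1 / 2), 0 < bianchiReducedDenom W m p :=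
    fun p hp => bianchiReducedDenom_pos hW0.le m hp.1.le
  have hEq : EqOn (fun p => 2 / bianchiReducedDenom W m p)
      (fun p : ℝ => 2 * (1 - 2 * p) / ((1 - 2 * p) * (W + 1) + p * W * (1 - (2 * p) ^ m)))
      (Ioo 0 (1 / 2)) := fun p hp =>
    (bianchi_tau_eq_two_div_reducedDenom W m (by linarith [hp.2])).symm
  have hanti : StrictAntiOn (fun p => 2 / bianchiReducedDenom W m p) (Ioo 0 (1 / 2)) :=
    fun x hx y hy hxy => div_lt_div_of_pos_left two_pos (hpos x hx)
      (bianchiReducedDenom_strictMonoOn hW0 (by omega) (mem_Ici.mpr hx.1.le)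
        (mem_Ici.mpr hy.1.le) hxy)
  have hcont : ContinuousOn (fun p => 2 / bianchiReducedDenom W m p) (Ioo 0 (1 / 2)) :=
    continuousOn_const.div (continuous_bianchiReducedDenom W m).continuousOn
      fun p hp => (hpos p hp).ne'
  exact ⟨hcont.congr hEq.symm, hanti.congr hEq, (hanti.congr hEq).injOn⟩
end

section
/- Let W denote the Lambert W function (principal branch). For a > 0 and μ ∈ (0, ∞), the solution of h(a/t) = μ, where h(x) = (ln(1+x) − x/(1+x))/ln 2, is t = −a/(1 + 1/W(−e^{−(μ ln 2 + 1)})), and this t is positive because W(−e^{−(μ ln 2+1)}) ∈ (−1, 0). -/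
/-! The hypothesis says `w = W(-e^{-(μ ln 2 + 1)})` on the principal branch. Since the argument
lies in `(-1/e, 0)`, `w ∈ (-1, 0)`, and taking logarithms of `(-w) e^w = e^{-(μ ln 2 + 1)}` gives
`ln(-w) = -(μ ln 2 + 1) - w`. With `t = -a/(1 + 1/w)` one has `a/t = -(1 + 1/w)` and
`1 + a/t = -1/w`, so `ln(1 + a/t) - (a/t)/(1 + a/t) = -ln(-w) - (w + 1) = μ ln 2`. -/

open Real Set

lemma neg_exp_neg_add_one_mem_Ioo {s : ℝ} (hs : 0 < s) :
    -exp (-(s + 1)) ∈ Ioo (-exp (-1)) 0 :=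
  ⟨neg_lt_neg (exp_lt_exp.2 (by linarith)), neg_lt_zero.2 (exp_pos _)⟩

lemma mem_Ioo_of_mul_exp_mem_Ioo {w : ℝ} (hw : -1 ≤ w)
    (h : w * exp w ∈ Ioo (-exp (-1)) 0) : w ∈ Ioo (-1) 0 := by
  refine ⟨lt_of_le_of_ne hw ?_, ?_⟩
  · rintro rfl
    simp at h
  · by_contra! hw0
    exact h.2.not_ge (mul_nonneg hw0 (exp_pos w).le)

lemma log_neg_eq_of_mul_exp_eq_neg_exp {w y : ℝ} (h : w * exp w = -exp y) :
    log (-w) = y - w := by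
  have hexp : -w = exp (y - w) := by
    rw [exp_sub, eq_div_iff (exp_ne_zero w)]
    linarith
  rw [hexp, log_exp]

lemma log_one_add_sub_div_one_add_of_eq_neg_one_add_inv {w x : ℝ} (hw : w ≠ 0)
    (hx : x = -(1 + 1 / w)) : log (1 + x) - x / (1 + x) = -log (-w) - (w + 1) := by
  have hx1 : 1 + x = (-w)⁻¹ := by
    rw [hx]
    field_simp
    ring
  rw [hx1, log_inv, hx]
  field_simp

/-- Closed-form time allocation via the Lambert W function: if w is the principal-branch
value of W at −e^{−(μ ln 2 + 1)} (i.e. w·e^w = −e^{−(μ ln 2+1)} with w ≥ −1), a > 0 and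
μ > 0, then w ∈ (−1,0), t = −a/(1 + 1/w) is positive, and t solves h(a/t) = μ where
h(x) = (ln(1+x) − x/(1+x))/ln 2. -/
theorem lambert_time_allocation (a μ w : ℝ) (ha : 0 < a) (hμ : 0 < μ)
    (hw : w * Real.exp w = -Real.exp (-(μ * Real.log 2 + 1))) (hwpr : -1 ≤ w) :
    w ∈ Set.Ioo (-1 : ℝ) 0 ∧
    0 < -a / (1 + 1 / w) ∧
    (Real.log (1 + a / (-a / (1 + 1 / w)))
        - (a / (-a / (1 + 1 / w))) / (1 + a / (-a / (1 + 1 / w)))) / Real.log 2 = μ := by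
  have hwI : w ∈ Ioo (-1) 0 := mem_Ioo_of_mul_exp_mem_Ioo hwpr
    (hw ▸ neg_exp_neg_add_one_mem_Ioo (mul_pos hμ (log_pos one_lt_two)))
  have hs : 1 + 1 / w < 0 := by
    rw [one_add_div hwI.2.ne]
    exact div_neg_of_pos_of_neg (by linarith [hwI.1]) hwI.2
  have hat : a / (-a / (1 + 1 / w)) = -(1 + 1 / w) := by
    rw [neg_div, div_neg, div_div_cancel₀ ha.ne']
  refine ⟨hwI, div_pos_of_neg_of_neg (neg_lt_zero.2 ha) hs, ?_⟩
  rw [log_one_add_sub_div_one_add_of_eq_neg_one_add_inv hwI.2.ne hat,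
    log_neg_eq_of_mul_exp_eq_neg_exp hw]
  field_simp [(log_pos one_lt_two).ne']
  ring
end
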